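/- arXiv:2003.00681 — 2 statements merged into one kernel-verified Lean document; each statement's English description precedes it below -/
import Mathlib

section
/- Let Δ be a generalised quadrangle (an incidence geometry of points and lines with no triangles: there do not exist three pairwise distinct lines pairwise meeting in three distinct points), and let G be a group acting on Δ by type-preserving collineations. Let l be a line of Δ. If for every g ∈ G the lines l and l^g share a common point (i.e., no g maps l to a line disjoint from l), then either l^g = l for all g ∈ G, or there is a single point q lying on every line l^g (g ∈ G), and this point q is fixed by every element of G. -/
/-!
If `l` meets each of its images, the orbit of `l` is a family of pairwise intersecting lines.
Since a generalised quadrangle has no triangles, once the orbit contains two distinct lines,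
their common point `q` lies on every line of the orbit. The point `q` is then fixed by `G`:
its image under any element of `G` is again the intersection of two distinct lines of the orbit.
-/

/-- A generalised quadrangle, presented as a point-line incidence geometry in which two
distinct lines meet in at most one point and which contains no triangles (there are no
three pairwise distinct lines pairwise meeting in three distinct points; equivalently,
three pairwise distinct pairwise intersecting lines are concurrent). -/
structure GenQuadrangle where
  Point : Type
  Line : Type
  Incident : Point → Line → Prop
  meet_unique : ∀ (p q : Point) (l m : Line), l ≠ m →
    Incident p l → Incident p m → Incident q l → Incident q m → p = q
  no_triangle : ∀ (l₁ l₂ l₃ : Line) (p₁₂ p₂₃ p₁₃ : Point),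
    l₁ ≠ l₂ → l₂ ≠ l₃ → l₁ ≠ l₃ →
    Incident p₁₂ l₁ → Incident p₁₂ l₂ →
    Incident p₂₃ l₂ → Incident p₂₃ l₃ →
    Incident p₁₃ l₁ → Incident p₁₃ l₃ →
    p₁₂ = p₂₃ ∧ p₁₂ = p₁₃

namespace GenQuadrangle

variable (Δ : GenQuadrangle)

theorem incident_of_pairwise_meet {S : Set Δ.Line}
    (hS : S.Pairwise fun m n => ∃ p, Δ.Incident p m ∧ Δ.Incident p n)
    {l₁ l₂ : Δ.Line} (hl₁ : l₁ ∈ S) (hl₂ : l₂ ∈ S) (hne : l₁ ≠ l₂)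
    {q : Δ.Point} (hq₁ : Δ.Incident q l₁) (hq₂ : Δ.Incident q l₂)
    {m : Δ.Line} (hm : m ∈ S) : Δ.Incident q m := by
  by_cases hm₁ : m = l₁
  · exact hm₁ ▸ hq₁
  by_cases hm₂ : m = l₂
  · exact hm₂ ▸ hq₂
  obtain ⟨p₁, hp₁l, hp₁m⟩ := hS hl₁ hm (Ne.symm hm₁)
  obtain ⟨p₂, hp₂l, hp₂m⟩ := hS hl₂ hm (Ne.symm hm₂)
  obtain ⟨-, rfl⟩ := Δ.no_triangle l₁ l₂ m q p₂ p₁ hne (Ne.symm hm₂) (Ne.symm hm₁)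
    hq₁ hq₂ hp₂l hp₂m hp₁l hp₁m
  exact hp₁m

section Collineations

variable {Δ} {G : Type*} [Group G]
  {ρP : G →* Equiv.Perm Δ.Point} {ρL : G →* Equiv.Perm Δ.Line}

theorem orbit_pairwise_meet
    (hρ : ∀ (g : G) (q : Δ.Point) (m : Δ.Line),
      Δ.Incident q m → Δ.Incident (ρP g q) (ρL g m))
    {l : Δ.Line} (hmeet : ∀ g : G, ∃ q : Δ.Point, Δ.Incident q l ∧ Δ.Incident q (ρL g l)) :
    (Set.range fun g => ρL g l).Pairwise fun m n => ∃ p, Δ.Incident p m ∧ Δ.Incident p n := by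
  rintro _ ⟨a, rfl⟩ _ ⟨b, rfl⟩ -
  obtain ⟨p, hpl, hpl'⟩ := hmeet (a⁻¹ * b)
  refine ⟨ρP a p, hρ a p l hpl, ?_⟩
  simpa only [← Equiv.Perm.mul_apply, ← map_mul, mul_inv_cancel_left] using hρ a p _ hpl'

theorem fixed_of_incident_orbit
    (hρ : ∀ (g : G) (q : Δ.Point) (m : Δ.Line),
      Δ.Incident q m → Δ.Incident (ρP g q) (ρL g m))
    {l : Δ.Line} {g : G} (hg : ρL g l ≠ l)
    {q : Δ.Point} (hq : ∀ h : G, Δ.Incident q (ρL h l)) (h : G) : ρP h q = q := by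
  have hne : ρL h l ≠ ρL (h * g) l := by
    rw [map_mul, Equiv.Perm.mul_apply, Ne, (ρL h).apply_eq_iff_eq]
    exact hg.symm
  have hq' : Δ.Incident (ρP h q) (ρL (h * g) l) := by
    simpa only [map_mul, Equiv.Perm.mul_apply] using hρ h q _ (hq g)
  exact Δ.meet_unique _ _ _ _ hne (hρ h q l (by simpa using hq 1)) hq' (hq h) (hq (h * g))

end Collineations

end GenQuadrangle

/-- Let `G` act on a generalised quadrangle `Δ` by type-preserving
collineations and let `l` be a line. If for every `g ∈ G` the lines `l` and `l^g` share a
common point, then either `l^g = l` for all `g`, or there is a single point `q` lying on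
every line `l^g` which is fixed by every element of `G`. -/
theorem stmt1 (Δ : GenQuadrangle) (G : Type*) [Group G]
    (ρP : G →* Equiv.Perm Δ.Point) (ρL : G →* Equiv.Perm Δ.Line)
    (hρ : ∀ (g : G) (q : Δ.Point) (m : Δ.Line),
      Δ.Incident q m ↔ Δ.Incident (ρP g q) (ρL g m))
    (l : Δ.Line)
    (hmeet : ∀ g : G, ∃ q : Δ.Point, Δ.Incident q l ∧ Δ.Incident q (ρL g l)) :
    (∀ g : G, ρL g l = l) ∨
    (∃ q : Δ.Point, (∀ g : G, Δ.Incident q (ρL g l)) ∧ (∀ g : G, ρP g q = q)) := by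
  by_cases hfix : ∀ g : G, ρL g l = l
  · exact Or.inl hfix
  push Not at hfix
  obtain ⟨g, hg⟩ := hfix
  obtain ⟨q, hql, hqg⟩ := hmeet g
  have hρ' := fun g q m => (hρ g q m).mp
  have hq : ∀ h : G, Δ.Incident q (ρL h l) := fun h =>
    Δ.incident_of_pairwise_meet (GenQuadrangle.orbit_pairwise_meet hρ' hmeet)
      ⟨1, by simp⟩ ⟨g, rfl⟩ hg.symm hql hqg ⟨h, rfl⟩
  exact Or.inr ⟨q, hq, GenQuadrangle.fixed_of_incident_orbit hρ' hg hq⟩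
end

section
/- Let T be a complete ℝ-tree and let A and B be disjoint nonempty closed subtrees (closed convex subsets) of T. Then there exists a unique geodesic segment [a, b] with a ∈ A, b ∈ B realizing the distance d(A, B), i.e., d(a, b) = d(A, B) > 0, and this segment meets A only in a and B only in b. -/
/-!
Since `A` and `B` are convex and disjoint, for `a, a' ∈ A` and `b, b' ∈ B` the tripod spanned by
`a, a', b` branches off at a point `m ∈ A`, and the tripod spanned by `b, b', m` at a point
`n ∈ B`; the four-point condition then forces the geodesics `[a, b]` and `[a', b']` to run through
the bridge `[m, n]`, whose length is at least `d`. This gives the bridge inequality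
`d(a, a') + d(b, b') + 2 d ≤ d(a, b) + d(a', b')`. It makes every minimizing sequence of pairs
Cauchy, so by completeness `d` is attained, and applied to two minimizing pairs it shows that they
coincide.

The tripod points exist because bisection with midpoints, plus completeness, finds a point at any
prescribed distance along a geodesic, and the four-point condition puts the point of `[x, y]` at
distance `(y | z)_x` from `x` on the other two sides as well.
-/

open Filter Topology

section RTree

variable {T : Type*} [MetricSpace T]

def HasMidpoints (T : Type*) [MetricSpace T] : Prop :=
  ∀ x y : T, ∃ m : T, dist x m = dist x y / 2 ∧ dist m y = dist x y / 2

def FourPointCondition (T : Type*) [MetricSpace T] : Prop :=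
  ∀ x y z w : T, dist x y + dist z w ≤ max (dist x z + dist y w) (dist x w + dist y z)

def MetricConvex (A : Set T) : Prop :=
  ∀ x ∈ A, ∀ y ∈ A, ∀ z : T, dist x z + dist z y = dist x y → z ∈ A

lemma exists_bisection_step (hmid : HasMidpoints T) {x y z w : T} {t : ℝ}
    (h : dist x z + dist z w + dist w y = dist x y) (hz : dist x z ≤ t) (hw : t ≤ dist x w) :
    ∃ z' w' : T, (dist x z' + dist z' w' + dist w' y = dist x y ∧ dist x z' ≤ t ∧ t ≤ dist x w') ∧
      dist z' w' = dist z w / 2 ∧ dist z z' ≤ dist z w / 2 := by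
  obtain ⟨m, hzm, hmw⟩ := hmid z w
  have hxm : dist x m = dist x z + dist z w / 2 := by
    linarith [dist_triangle x z m, dist_triangle x m w, dist_triangle x w y]
  by_cases hmt : dist x m ≤ t
  · exact ⟨m, w, ⟨by linarith, hmt, hw⟩, hmw, hzm.le⟩
  · refine ⟨z, m, ⟨?_, hz, (not_le.1 hmt).le⟩, hzm, by rw [dist_self]; positivity⟩
    linarith [dist_triangle m w y, dist_triangle x m y]

theorem exists_dist_eq_of_le_dist [CompleteSpace T] (hmid : HasMidpoints T) {x y : T} {t : ℝ}
    (ht₀ : 0 ≤ t) (ht : t ≤ dist x y) :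
    ∃ z, dist x z = t ∧ dist x z + dist z y = dist x y := by
  let Bracket : T × T → Prop := fun p =>
    dist x p.1 + dist p.1 p.2 + dist p.2 y = dist x y ∧ dist x p.1 ≤ t ∧ t ≤ dist x p.2
  have step : ∀ p : Subtype Bracket, ∃ q : Subtype Bracket,
      dist q.1.1 q.1.2 = dist p.1.1 p.1.2 / 2 ∧ dist p.1.1 q.1.1 ≤ dist p.1.1 p.1.2 / 2 := by
    rintro ⟨⟨z, w⟩, h, hz, hw⟩
    obtain ⟨z', w', hq, hhalf, hnear⟩ := exists_bisection_step hmid h hz hw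
    exact ⟨⟨(z', w'), hq⟩, hhalf, hnear⟩
  choose g hg_half hg_near using step
  let s : ℕ → Subtype Bracket := fun n => g^[n] ⟨(x, y), by simp [Bracket, ht₀, ht]⟩
  have hs_succ (n : ℕ) : s (n + 1) = g (s n) := Function.iterate_succ_apply' g n _
  have hlen (n : ℕ) : dist (s n).1.1 (s n).1.2 = dist x y / 2 ^ n := by
    induction n with
    | zero => simp [s]
    | succ n ih => rw [hs_succ, hg_half, ih, pow_succ, div_div]
  have hcauchy : CauchySeq fun n => (s n).1.1 := by
    refine cauchySeq_of_le_geometric_two (C := dist x y) fun n => ?_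
    rw [hs_succ, div_right_comm, ← hlen]
    exact hg_near _
  obtain ⟨l, hl⟩ := cauchySeq_tendsto_of_complete hcauchy
  have hdist : Tendsto (fun n => dist x (s n).1.1) atTop (𝓝 (dist x l)) :=
    tendsto_const_nhds.dist hl
  refine ⟨l, le_antisymm (le_of_tendsto' hdist fun n => (s n).2.2.1) ?_, ?_⟩
  · have hshrink : Tendsto (fun n : ℕ => dist x (s n).1.1 + dist x y / 2 ^ n) atTop
        (𝓝 (dist x l)) := by
      simpa using hdist.add (tendsto_const_nhds.div_atTop (tendsto_pow_atTop_atTop_of_one_lt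
        one_lt_two))
    refine ge_of_tendsto' hshrink fun n => ?_
    obtain ⟨hb, -, hw⟩ := (s n).2
    linarith [hlen n, dist_triangle x (s n).1.1 (s n).1.2]
  · have hbetween (n : ℕ) : dist x (s n).1.1 + dist (s n).1.1 y = dist x y := by
      obtain ⟨hb, -⟩ := (s n).2
      linarith [dist_triangle (s n).1.1 (s n).1.2 y, dist_triangle x (s n).1.1 y]
    exact tendsto_nhds_unique ((hdist.add (hl.dist tendsto_const_nhds)).congr hbetween)
      tendsto_const_nhds

theorem exists_median [CompleteSpace T] (hmid : HasMidpoints T) (hfour : FourPointCondition T)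
    (x y z : T) :
    ∃ m : T, dist x m + dist m y = dist x y ∧ dist x m + dist m z = dist x z ∧
      dist y m + dist m z = dist y z := by
  -- `m` sits at the Gromov product `(y | z)_x` from `x`.
  obtain ⟨m, hxm, hmy⟩ := exists_dist_eq_of_le_dist hmid (x := x) (y := y)
    (t := (dist x y + dist x z - dist y z) / 2) (by linarith [dist_triangle y x z, dist_comm x y])
    (by linarith [dist_triangle x y z, dist_triangle x z y, dist_comm z y])
  have hfour' := hfour z m x y
  rw [dist_comm z x, dist_comm z y, dist_comm m x] at hfour'
  have hmz : dist m z + dist x m ≤ dist x z := by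
    rcases le_max_iff.1 hfour' with h | h <;> linarith [dist_comm z m]
  refine ⟨m, hmy, ?_, ?_⟩ <;>
    linarith [dist_triangle x m z, dist_triangle y m z, dist_comm y m, dist_comm m z]

theorem bridge_inequality [CompleteSpace T] (hmid : HasMidpoints T) (hfour : FourPointCondition T)
    {A B : Set T} (hA : MetricConvex A) (hB : MetricConvex B) (hAB : Disjoint A B) {d : ℝ}
    (hd : ∀ a ∈ A, ∀ b ∈ B, d ≤ dist a b) {a a' b b' : T} (ha : a ∈ A) (ha' : a' ∈ A)
    (hb : b ∈ B) (hb' : b' ∈ B) :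
    dist a a' + dist b b' + 2 * d ≤ dist a b + dist a' b' := by
  obtain ⟨m, hm₁, hm₂, hm₃⟩ := exists_median hmid hfour a a' b
  have hmA : m ∈ A := hA a ha a' ha' m hm₁
  obtain ⟨n, hn₁, hn₂, hn₃⟩ := exists_median hmid hfour b b' m
  have hnB : n ∈ B := hB b hb b' hb' n hn₁
  have hmn : 0 < dist m n := dist_pos.2 (hAB.ne_of_mem hmA hnB)
  have hm_to_n : dist a' m + dist m n ≤ dist a' n := by
    linarith [dist_triangle a' n b, dist_comm m b, dist_comm n m, dist_comm n b]
  -- The other branch of the four-point condition would force `m = n`.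
  have hbridge : dist a' m + dist m n + dist n b' ≤ dist a' b' := by
    rcases le_max_iff.1 (hfour a' n m b') with h | h <;>
      linarith [dist_triangle a' m n, dist_comm n m, dist_comm n b', dist_comm m b']
  linarith [hd m hmA n hnB, dist_comm m a', dist_comm m b, dist_comm n m]

lemma bddBelow_image2_dist (A B : Set T) : BddBelow (Set.image2 dist A B) :=
  ⟨0, Set.forall_mem_image2.2 fun _ _ _ _ => dist_nonneg⟩

lemma sInf_image2_dist_le {A B : Set T} {a b : T} (ha : a ∈ A) (hb : b ∈ B) :
    sInf (Set.image2 dist A B) ≤ dist a b :=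
  csInf_le (bddBelow_image2_dist A B) (Set.mem_image2_of_mem ha hb)

theorem exists_dist_eq_sInf_of_bridge [CompleteSpace T] {A B : Set T} (hA : A.Nonempty)
    (hB : B.Nonempty) (hAcl : IsClosed A) (hBcl : IsClosed B)
    (hbridge : ∀ a ∈ A, ∀ a' ∈ A, ∀ b ∈ B, ∀ b' ∈ B,
      dist a a' + dist b b' + 2 * sInf (Set.image2 dist A B) ≤ dist a b + dist a' b') :
    ∃ a ∈ A, ∃ b ∈ B, dist a b = sInf (Set.image2 dist A B) := by
  obtain ⟨u, hu_anti, hu_lim, hu_mem⟩ := exists_seq_tendsto_sInf (hA.image2 (f := dist) hB)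
    (bddBelow_image2_dist A B)
  set d := sInf (Set.image2 dist A B)
  choose p hpA q hqB hpq using hu_mem
  have hclose (i j N : ℕ) (hi : N ≤ i) (hj : N ≤ j) :
      dist (p i) (p j) + dist (q i) (q j) ≤ 2 * (u N - d) := by
    linarith [hbridge _ (hpA i) _ (hpA j) _ (hqB i) _ (hqB j), hpq i, hpq j, hu_anti hi,
      hu_anti hj]
  have hgap : Tendsto (fun N => 2 * (u N - d)) atTop (𝓝 0) := by
    simpa using (hu_lim.sub_const d).const_mul 2
  have hp : CauchySeq p := cauchySeq_of_le_tendsto_0 _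
    (fun i j N hi hj => by linarith [hclose i j N hi hj, dist_nonneg (x := q i) (y := q j)]) hgap
  have hq : CauchySeq q := cauchySeq_of_le_tendsto_0 _
    (fun i j N hi hj => by linarith [hclose i j N hi hj, dist_nonneg (x := p i) (y := p j)]) hgap
  obtain ⟨a, ha⟩ := cauchySeq_tendsto_of_complete hp
  obtain ⟨b, hb⟩ := cauchySeq_tendsto_of_complete hq
  refine ⟨a, hAcl.mem_of_tendsto ha (.of_forall hpA), b, hBcl.mem_of_tendsto hb (.of_forall hqB),
    tendsto_nhds_unique (ha.dist hb) ?_⟩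
  simpa only [hpq] using hu_lim

end RTree

/-- Let `T` be a complete ℝ-tree (a geodesic metric space, given here by a
midpoint property, satisfying the 0-hyperbolic four-point condition), and let `A`, `B` be
disjoint nonempty closed subtrees (closed convex subsets).  Then there is a unique
geodesic segment `[a, b]` with `a ∈ A`, `b ∈ B` realizing the distance
`d = d(A, B) > 0`, and this segment meets `A` only in `a` and `B` only in `b`. -/
theorem stmt12 {T : Type*} [MetricSpace T] [CompleteSpace T]
    (hmid : ∀ x y : T, ∃ m : T, dist x m = dist x y / 2 ∧ dist m y = dist x y / 2)
    (hfour : ∀ x y z w : T,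
      dist x y + dist z w ≤ max (dist x z + dist y w) (dist x w + dist y z))
    (A B : Set T) (hA : A.Nonempty) (hB : B.Nonempty)
    (hAcl : IsClosed A) (hBcl : IsClosed B)
    (hAconv : ∀ x ∈ A, ∀ y ∈ A, ∀ z : T, dist x z + dist z y = dist x y → z ∈ A)
    (hBconv : ∀ x ∈ B, ∀ y ∈ B, ∀ z : T, dist x z + dist z y = dist x y → z ∈ B)
    (hdisj : Disjoint A B)
    (d : ℝ) (hd : d = sInf {r : ℝ | ∃ a ∈ A, ∃ b ∈ B, dist a b = r}) :
    ∃ a ∈ A, ∃ b ∈ B, dist a b = d ∧ 0 < d ∧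
      (∀ z : T, dist a z + dist z b = dist a b →
        (z ∈ A → z = a) ∧ (z ∈ B → z = b)) ∧
      (∀ a' ∈ A, ∀ b' ∈ B, dist a' b' = d → a' = a ∧ b' = b) := by
  change d = sInf (Set.image2 dist A B) at hd
  subst hd
  have hbridge {a a' b b' : T} (ha : a ∈ A) (ha' : a' ∈ A) (hb : b ∈ B) (hb' : b' ∈ B) :=
    bridge_inequality hmid hfour hAconv hBconv hdisj (fun _ ha _ hb => sInf_image2_dist_le ha hb)
      ha ha' hb hb'
  obtain ⟨a, ha, b, hb, hab⟩ := exists_dist_eq_sInf_of_bridge hA hB hAcl hBcl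
    fun _ ha _ ha' _ hb _ hb' => hbridge ha ha' hb hb'
  refine ⟨a, ha, b, hb, hab, hab ▸ dist_pos.2 (hdisj.ne_of_mem ha hb), fun z hz => ⟨fun hzA => ?_,
    fun hzB => ?_⟩, fun a' ha' b' hb' hab' => ?_⟩
  · exact (dist_le_zero.1 (by linarith [sInf_image2_dist_le hzA hb])).symm
  · exact dist_le_zero.1 (by linarith [sInf_image2_dist_le ha hzB])
  · have hpairs := hbridge ha ha' hb hb'
    exact ⟨(dist_le_zero.1 (by linarith [dist_nonneg (x := b) (y := b')])).symm,
      (dist_le_zero.1 (by linarith [dist_nonneg (x := a) (y := a')])).symm⟩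
end
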